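/- arXiv:2505.07015 — 3 statements merged into one kernel-verified Lean document; each statement's English description precedes it below -/
import Mathlib

section
/- Let ε > 0, W_ε(x) = (1/(2ε)) e^{−|x|/ε}, and let u : ℝ → ℝ be continuous, bounded, integrable and square-integrable. Then |∫_ℝ u(x)·(u(x) − (W_ε ∗ u)(x)) dx| ≤ ε² · ‖u‖_{L²(ℝ)} · ‖(W_ε ∗ u)''‖_{L²(ℝ)}. -/
/-!
Splitting at `y = x`, the convolution with `e^{-k|x|}` is
`e^{-kx} ∫_{y ≤ x} e^{ky} u(y) dy + e^{kx} ∫_{y > x} e^{-ky} u(y) dy`, and the fundamental theorem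
of calculus applied to both pieces shows that `w = e^{-k|·|} ∗ u` solves `w'' = k² w - 2k u`
everywhere. With `k = 1/ε` this says `u - W_ε ∗ u = -ε² (W_ε ∗ u)''`, so the integral equals
`-ε² ∫ u (W_ε ∗ u)''` and Cauchy–Schwarz gives the bound.
-/

open MeasureTheory Set Real

section OneSidedIntegral

variable {E : Type*} [NormedAddCommGroup E] [NormedSpace ℝ E] [CompleteSpace E] {f : ℝ → E}

theorem hasDerivAt_setIntegral_Iic (hf : Continuous f) (hf_int : ∀ x, IntegrableOn f (Iic x))
    (x : ℝ) : HasDerivAt (fun s => ∫ y in Iic s, f y) (f x) x := by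
  have hsplit : (fun s => ∫ y in Iic s, f y) = fun s => (∫ y in Iic 0, f y) + ∫ y in 0..s, f y := by
    funext s
    rw [← intervalIntegral.integral_Iic_sub_Iic (hf_int 0) (hf_int s), add_sub_cancel]
  rw [hsplit]
  exact (intervalIntegral.integral_hasDerivAt_right (hf.intervalIntegrable 0 x)
    hf.aestronglyMeasurable.stronglyMeasurableAtFilter hf.continuousAt).const_add _

theorem hasDerivAt_setIntegral_Ioi (hf : Continuous f) (hf_int : ∀ x, IntegrableOn f (Ioi x))
    (x : ℝ) : HasDerivAt (fun s => ∫ y in Ioi s, f y) (-f x) x := by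
  have hsplit : (fun s => ∫ y in Ioi s, f y) = fun s => (∫ y in Ioi 0, f y) - ∫ y in 0..s, f y := by
    funext s
    rw [← intervalIntegral.integral_Ioi_sub_Ioi' (hf_int 0) (hf_int s), sub_sub_cancel]
  rw [hsplit]
  exact (intervalIntegral.integral_hasDerivAt_right (hf.intervalIntegrable 0 x)
    hf.aestronglyMeasurable.stronglyMeasurableAtFilter hf.continuousAt).const_sub _

end OneSidedIntegral

theorem enorm_integral_mul_le_eLpNorm_mul_eLpNorm {α : Type*} [MeasurableSpace α] {μ : Measure α}
    {p q : ENNReal} [p.HolderTriple q 1] {f g : α → ℝ}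
    (hf : AEStronglyMeasurable f μ) (hg : AEStronglyMeasurable g μ) :
    ‖∫ x, f x * g x ∂μ‖ₑ ≤ eLpNorm f p μ * eLpNorm g q μ :=
  calc ‖∫ x, f x * g x ∂μ‖ₑ ≤ eLpNorm (f • g) 1 μ := by
        rw [eLpNorm_one_eq_lintegral_enorm]
        exact enorm_integral_le_lintegral_enorm _
    _ ≤ eLpNorm f p μ * eLpNorm g q μ := eLpNorm_smul_le_mul_eLpNorm hg hf

section ExpKernel

variable {k : ℝ} {u : ℝ → ℝ}

noncomputable def expConv (k : ℝ) (u : ℝ → ℝ) (x : ℝ) : ℝ := ∫ y, exp (-k * |x - y|) * u y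

noncomputable def expConvIic (k : ℝ) (u : ℝ → ℝ) (x : ℝ) : ℝ :=
  exp (-k * x) * ∫ y in Iic x, exp (k * y) * u y

noncomputable def expConvIoi (k : ℝ) (u : ℝ → ℝ) (x : ℝ) : ℝ :=
  exp (k * x) * ∫ y in Ioi x, exp (-k * y) * u y

theorem integrableOn_Iic_exp_mul_mul (hk : 0 ≤ k) (hu : Integrable u) (x : ℝ) :
    IntegrableOn (fun y => exp (k * y) * u y) (Iic x) := by
  refine hu.integrableOn.bdd_mul (c := exp (k * x)) (by fun_prop) ?_
  filter_upwards [ae_restrict_mem measurableSet_Iic] with y hy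
  rw [norm_of_nonneg (exp_pos _).le]
  exact exp_le_exp.2 (mul_le_mul_of_nonneg_left hy hk)

theorem integrableOn_Ioi_exp_neg_mul_mul (hk : 0 ≤ k) (hu : Integrable u) (x : ℝ) :
    IntegrableOn (fun y => exp (-k * y) * u y) (Ioi x) := by
  refine hu.integrableOn.bdd_mul (c := exp (-k * x)) (by fun_prop) ?_
  filter_upwards [ae_restrict_mem measurableSet_Ioi] with y hy
  rw [norm_of_nonneg (exp_pos _).le]
  exact exp_le_exp.2 (by nlinarith [mem_Ioi.1 hy])

theorem integrable_exp_neg_mul_abs_sub_mul (hk : 0 ≤ k) (hu : Integrable u) (x : ℝ) :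
    Integrable (fun y => exp (-k * |x - y|) * u y) := by
  refine hu.bdd_mul (c := 1) (by fun_prop) (Filter.Eventually.of_forall fun y => ?_)
  rw [norm_of_nonneg (exp_pos _).le, exp_le_one_iff]
  nlinarith [abs_nonneg (x - y)]

theorem expConv_eq_expConvIic_add_expConvIoi (hk : 0 ≤ k) (hu : Integrable u) (x : ℝ) :
    expConv k u x = expConvIic k u x + expConvIoi k u x := by
  have hIic : ∫ y in Iic x, exp (-k * |x - y|) * u y = expConvIic k u x := by
    rw [expConvIic, ← integral_const_mul]
    refine setIntegral_congr_fun measurableSet_Iic fun y hy => ?_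
    rw [abs_of_nonneg (sub_nonneg.2 hy), ← mul_assoc, ← exp_add]
    ring_nf
  have hIoi : ∫ y in Ioi x, exp (-k * |x - y|) * u y = expConvIoi k u x := by
    rw [expConvIoi, ← integral_const_mul]
    refine setIntegral_congr_fun measurableSet_Ioi fun y hy => ?_
    rw [abs_of_neg (sub_neg.2 hy), ← mul_assoc, ← exp_add]
    ring_nf
  rw [expConv, ← integral_add_compl measurableSet_Iic (integrable_exp_neg_mul_abs_sub_mul hk hu x),
    compl_Iic, hIic, hIoi]

variable (hk : 0 ≤ k) (hu_cont : Continuous u) (hu : Integrable u)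
include hk hu_cont hu

theorem hasDerivAt_expConvIic (x : ℝ) :
    HasDerivAt (expConvIic k u) (-k * expConvIic k u x + u x) x := by
  have hintegral := hasDerivAt_setIntegral_Iic (by fun_prop) (integrableOn_Iic_exp_mul_mul hk hu) x
  have hexp : HasDerivAt (fun x => exp (-k * x)) (exp (-k * x) * (-k * 1)) x :=
    ((hasDerivAt_id' x).const_mul (-k)).exp
  refine (hexp.mul hintegral).congr_deriv ?_
  have hcancel : exp (-k * x) * exp (k * x) = 1 := by rw [← exp_add]; simp
  rw [expConvIic]
  linear_combination u x * hcancel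

theorem hasDerivAt_expConvIoi (x : ℝ) :
    HasDerivAt (expConvIoi k u) (k * expConvIoi k u x - u x) x := by
  have hintegral := hasDerivAt_setIntegral_Ioi (by fun_prop) (integrableOn_Ioi_exp_neg_mul_mul hk hu) x
  have hexp : HasDerivAt (fun x => exp (k * x)) (exp (k * x) * (k * 1)) x :=
    ((hasDerivAt_id' x).const_mul k).exp
  refine (hexp.mul hintegral).congr_deriv ?_
  have hcancel : exp (-k * x) * exp (k * x) = 1 := by rw [← exp_add]; simp
  rw [expConvIoi]
  linear_combination -u x * hcancel

theorem deriv_expConv :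
    deriv (expConv k u) = fun x => k * (expConvIoi k u x - expConvIic k u x) := by
  funext x
  have hsplit : expConv k u = expConvIic k u + expConvIoi k u :=
    funext (expConv_eq_expConvIic_add_expConvIoi hk hu)
  rw [hsplit]
  convert ((hasDerivAt_expConvIic hk hu_cont hu x).add
    (hasDerivAt_expConvIoi hk hu_cont hu x)).deriv using 1
  ring

theorem deriv_deriv_expConv :
    deriv (deriv (expConv k u)) = fun x => k ^ 2 * expConv k u x - 2 * k * u x := by
  funext x
  rw [deriv_expConv hk hu_cont hu, expConv_eq_expConvIic_add_expConvIoi hk hu]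
  have h : HasDerivAt (fun x => k * (expConvIoi k u x - expConvIic k u x))
      (k * ((k * expConvIoi k u x - u x) - (-k * expConvIic k u x + u x))) x :=
    ((hasDerivAt_expConvIoi hk hu_cont hu x).sub (hasDerivAt_expConvIic hk hu_cont hu x)).const_mul k
  rw [h.deriv]
  ring

end ExpKernel

theorem energy_difference_estimate_general (ε : ℝ) (hε : 0 < ε)
    (Wε : ℝ → ℝ) (hW : ∀ x, Wε x = (1 / (2 * ε)) * Real.exp (-|x| / ε))
    (u : ℝ → ℝ) (hu_cont : Continuous u)
    (hu_int : Integrable u (volume : Measure ℝ)) :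
    ENNReal.ofReal |∫ x : ℝ, u x * (u x - ∫ y : ℝ, Wε (x - y) * u y)|
      ≤ ENNReal.ofReal (ε ^ 2) * eLpNorm u 2 (volume : Measure ℝ) *
        eLpNorm (deriv (deriv (fun z => ∫ y : ℝ, Wε (z - y) * u y))) 2 (volume : Measure ℝ) := by
  have hk : 0 ≤ ε⁻¹ := inv_nonneg.2 hε.le
  set v := fun z => ∫ y, Wε (z - y) * u y
  have hconv : v = fun z => (2 * ε)⁻¹ * expConv ε⁻¹ u z := by
    funext z
    simp only [v, hW, expConv, ← integral_const_mul, div_eq_inv_mul, one_mul, neg_mul, mul_neg,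
      mul_assoc]
  have hv'' : deriv (deriv v) = fun x => (v x - u x) / ε ^ 2 := by
    rw [hconv, deriv_const_mul_field', deriv_const_mul_field',
      deriv_deriv_expConv hk hu_cont hu_int]
    funext x
    field_simp
  have hintegral : ∫ x, u x * (u x - v x) = -(ε ^ 2) * ∫ x, u x * deriv (deriv v) x := by
    rw [← integral_const_mul, hv'']
    congr 1
    funext x
    field_simp
    ring
  rw [hintegral, abs_mul, abs_neg, abs_of_nonneg (sq_nonneg ε), ENNReal.ofReal_mul (sq_nonneg ε),
    mul_assoc, ← Real.enorm_eq_ofReal_abs]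
  gcongr
  exact enorm_integral_mul_le_eLpNorm_mul_eLpNorm hu_int.aestronglyMeasurable
    (measurable_deriv _).aestronglyMeasurable

/-- Quantitative energy estimate:
`|∫ u (u − W_ε ∗ u)| ≤ ε² ‖u‖_{L²} ‖(W_ε ∗ u)''‖_{L²}`. -/
theorem energy_difference_estimate (ε : ℝ) (hε : 0 < ε)
    (Wε : ℝ → ℝ) (hW : ∀ x, Wε x = (1 / (2 * ε)) * Real.exp (-|x| / ε))
    (u : ℝ → ℝ) (hu_cont : Continuous u) (hu_bdd : ∃ C, ∀ x, |u x| ≤ C)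
    (hu_int : Integrable u (volume : Measure ℝ))
    (hu_L2 : MemLp u 2 (volume : Measure ℝ)) :
    ENNReal.ofReal |∫ x : ℝ, u x * (u x - ∫ y : ℝ, Wε (x - y) * u y)|
      ≤ ENNReal.ofReal (ε ^ 2) * eLpNorm u 2 (volume : Measure ℝ) *
        eLpNorm (deriv (deriv (fun z => ∫ y : ℝ, Wε (z - y) * u y))) 2 (volume : Measure ℝ) :=
  energy_difference_estimate_general ε hε Wε hW u hu_cont hu_int
end

section
/- Let ε > 0 and W_ε(x) = (1/(2ε)) e^{−|x|/ε}. Let u : ℝ × ℝ → ℝ (time and space) and fix a time t. Assume: u(t,·) is nonnegative, integrable, and attains a global maximum at x* ∈ ℝ; u(t,·) is differentiable at x* (so ∂_x u(t,x*) = 0); and the function s ↦ u(s,x*) is differentiable at t with derivative ∂_t u(t,x*) = ∂_x u(t,x*) · ∂_x(W_ε ∗ u(t,·))(x*) − ε⁻² (u(t,x*) − (W_ε ∗ u(t,·))(x*)). Then ∂_t u(t,x*) ≤ 0. -/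
open MeasureTheory

/-!
At a global maximum `x*` of `u(t,·)` the transport term drops out because `∂ₓu(t,x*) = 0`, and
`W_ε` is a probability density, so `(W_ε ∗ u(t,·))(x*)` is an average of values `≤ u(t,x*)`;
hence `∂ₜu(t,x*) = -ε⁻²(u(t,x*) - W_ε ∗ u(t,·)(x*)) ≤ 0`.
-/

theorem integral_mul_le_of_ae_le {α : Type*} [MeasurableSpace α] {μ : Measure α}
    {K f : α → ℝ} {M : ℝ} (hK : 0 ≤ᵐ[μ] K) (hK_int : Integrable K μ)
    (hK_one : ∫ x, K x ∂μ = 1) (hKf : Integrable (fun x => K x * f x) μ)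
    (hf : ∀ᵐ x ∂μ, f x ≤ M) : ∫ x, K x * f x ∂μ ≤ M :=
  calc ∫ x, K x * f x ∂μ ≤ ∫ x, K x * M ∂μ := by
        refine integral_mono_ae hKf (hK_int.mul_const M) ?_
        filter_upwards [hK, hf] with x hKx hfx
        exact mul_le_mul_of_nonneg_left hfx hKx
    _ = M := by rw [integral_mul_const, hK_one, one_mul]

theorem integral_exp_neg_abs_div {ε : ℝ} (hε : 0 < ε) :
    ∫ x : ℝ, Real.exp (-|x| / ε) = 2 * ε := by
  have h := integral_exp_mul_Ioi (neg_lt_zero.2 (inv_pos.2 hε)) 0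
  rw [integral_comp_abs (f := fun s => Real.exp (-s / ε))]
  simp_rw [neg_div, div_eq_inv_mul, ← neg_mul]
  rw [h, mul_zero, Real.exp_zero, neg_div, div_neg, neg_neg, one_div, inv_inv]

theorem integrable_exp_neg_abs_div {ε : ℝ} (hε : 0 < ε) :
    Integrable fun x : ℝ => Real.exp (-|x| / ε) :=
  -- the Bochner integral of a non-integrable function is `0`
  .of_integral_ne_zero (by rw [integral_exp_neg_abs_div hε]; positivity)

/-- The mollification kernel `W_ε`. -/
noncomputable def expKernel (ε x : ℝ) : ℝ := 1 / (2 * ε) * Real.exp (-|x| / ε)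

section expKernel

variable {ε : ℝ}

theorem expKernel_nonneg (hε : 0 ≤ ε) (x : ℝ) : 0 ≤ expKernel ε x := by
  unfold expKernel; positivity

theorem expKernel_le (hε : 0 ≤ ε) (x : ℝ) : expKernel ε x ≤ 1 / (2 * ε) := by
  refine mul_le_of_le_one_right (by positivity) (Real.exp_le_one_iff.2 ?_)
  exact div_nonpos_of_nonpos_of_nonneg (neg_nonpos.2 (abs_nonneg x)) hε

theorem continuous_expKernel : Continuous (expKernel ε) := by
  unfold expKernel; fun_prop

theorem integrable_expKernel (hε : 0 < ε) : Integrable (expKernel ε) :=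
  (integrable_exp_neg_abs_div hε).const_mul _

theorem integral_expKernel (hε : 0 < ε) : ∫ x, expKernel ε x = 1 := by
  simp only [expKernel]
  rw [integral_const_mul, integral_exp_neg_abs_div hε]
  field_simp

theorem integral_expKernel_sub_mul_le {u : ℝ → ℝ} {M : ℝ} (hε : 0 < ε) (hu : Integrable u)
    (huM : ∀ y, u y ≤ M) (x : ℝ) : ∫ y, expKernel ε (x - y) * u y ≤ M := by
  refine integral_mul_le_of_ae_le (.of_forall fun y => expKernel_nonneg hε.le _)
    ((integrable_comp_sub_left _ x).2 (integrable_expKernel hε))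
    ((integral_sub_left_eq_self _ _ x).trans (integral_expKernel hε)) ?_ (.of_forall huM)
  refine hu.bdd_mul (c := 1 / (2 * ε)) (continuous_expKernel.comp
    (continuous_sub_left x)).aestronglyMeasurable (.of_forall fun y => ?_)
  rw [Real.norm_of_nonneg (expKernel_nonneg hε.le _)]
  exact expKernel_le hε.le _

end expKernel

theorem maximum_principle_time_derivative_nonpos_general (ε : ℝ) (hε : 0 < ε)
    (Wε : ℝ → ℝ) (hW : ∀ x, Wε x = (1 / (2 * ε)) * Real.exp (-|x| / ε))
    (u : ℝ → ℝ → ℝ) (t : ℝ)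
    (hint : Integrable (u t) (volume : Measure ℝ))
    (xstar : ℝ) (hmax : ∀ x, u t x ≤ u t xstar)
    (dx : ℝ) (hdx : HasDerivAt (fun x => u t x) dx xstar)
    (dt : ℝ)
    (heq : dt = dx * deriv (fun z => ∫ y : ℝ, Wε (z - y) * u t y) xstar
        - ε⁻¹ ^ 2 * (u t xstar - ∫ y : ℝ, Wε (xstar - y) * u t y)) :
    dt ≤ 0 := by
  obtain rfl : Wε = expKernel ε := funext hW
  have hdx_zero : dx = 0 :=
    ((isMaxOn_univ_iff.2 hmax).isLocalMax Filter.univ_mem).hasDerivAt_eq_zero hdx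
  have hconv := integral_expKernel_sub_mul_le hε hint hmax xstar
  rw [heq, hdx_zero, zero_mul, zero_sub, neg_nonpos]
  exact mul_nonneg (sq_nonneg _) (sub_nonneg.2 hconv)

/-- Maximum-principle step: if at time `t` the solution `u(t,·)` attains a global maximum at
`x*`, is differentiable there, and the time derivative at `(t,x*)` is given by the rewritten
nonlocal equation `∂_t u = ∂_x u · ∂_x(W_ε ∗ u) − ε⁻²(u − W_ε ∗ u)`, then `∂_t u(t,x*) ≤ 0`. -/
theorem maximum_principle_time_derivative_nonpos (ε : ℝ) (hε : 0 < ε)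
    (Wε : ℝ → ℝ) (hW : ∀ x, Wε x = (1 / (2 * ε)) * Real.exp (-|x| / ε))
    (u : ℝ → ℝ → ℝ) (t : ℝ)
    (hnonneg : ∀ x, 0 ≤ u t x)
    (hmeas : Measurable (u t))
    (hint : Integrable (u t) (volume : Measure ℝ))
    (xstar : ℝ) (hmax : ∀ x, u t x ≤ u t xstar)
    (dx : ℝ) (hdx : HasDerivAt (fun x => u t x) dx xstar)
    (dt : ℝ) (hdt : HasDerivAt (fun s => u s xstar) dt t)
    (heq : dt = dx * deriv (fun z => ∫ y : ℝ, Wε (z - y) * u t y) xstar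
        - ε⁻¹ ^ 2 * (u t xstar - ∫ y : ℝ, Wε (xstar - y) * u t y)) :
    dt ≤ 0 :=
  maximum_principle_time_derivative_nonpos_general ε hε Wε hW u t hint xstar hmax dx hdx dt heq
end

section
/- Let ε > 0 and W_ε(x) = (1/(2ε)) e^{−|x|/ε}. Let ρ₀ be a probability measure on ℝ, let T : ℝ → ℝ be a monotone nondecreasing measurable map, and let t ∈ [0,1]. Then ∫_ℝ ∫_ℝ W_ε((1−t)(x−y) + t(T(x)−T(y))) dρ₀(x) dρ₀(y) ≤ (1−t) ∫_ℝ ∫_ℝ W_ε(x−y) dρ₀(x) dρ₀(y) + t ∫_ℝ ∫_ℝ W_ε(T(x)−T(y)) dρ₀(x) dρ₀(y). -/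
open MeasureTheory

/-- Geodesic convexity of the nonlocal interaction energy along a one-dimensional optimal
transport interpolation: for a monotone map `T` and `t ∈ [0,1]`,
`∬ W_ε((1−t)(x−y) + t(T x − T y)) ≤ (1−t) ∬ W_ε(x−y) + t ∬ W_ε(T x − T y)`. -/
theorem nonlocal_energy_geodesically_convex (ε : ℝ) (hε : 0 < ε)
    (Wε : ℝ → ℝ) (hW : ∀ x, Wε x = (1 / (2 * ε)) * Real.exp (-|x| / ε))
    (ρ₀ : Measure ℝ) [IsProbabilityMeasure ρ₀]
    (T : ℝ → ℝ) (hT_mono : Monotone T) (hT_meas : Measurable T)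
    (t : ℝ) (ht0 : 0 ≤ t) (ht1 : t ≤ 1) :
    (∫ x : ℝ, ∫ y : ℝ, Wε ((1 - t) * (x - y) + t * (T x - T y)) ∂ρ₀ ∂ρ₀)
      ≤ (1 - t) * ∫ x : ℝ, ∫ y : ℝ, Wε (x - y) ∂ρ₀ ∂ρ₀
        + t * ∫ x : ℝ, ∫ y : ℝ, Wε (T x - T y) ∂ρ₀ ∂ρ₀ := by
  set c : ℝ := 1 / (2 * ε) with hc
  have hcpos : 0 < c := by positivity
  have hWfun : Wε = fun s => c * Real.exp (-|s| / ε) := funext hW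
  have hWcont : Continuous Wε := by
    rw [hWfun]
    exact continuous_const.mul ((continuous_neg.comp continuous_abs).div_const ε |>.rexp)
  have hWnn : ∀ s, 0 ≤ Wε s := fun s => by
    rw [hW]; positivity
  have hWle : ∀ s, Wε s ≤ c := fun s => by
    rw [hW s]
    have : Real.exp (-|s| / ε) ≤ 1 := by
      apply Real.exp_le_one_iff.2
      have : 0 ≤ |s| := abs_nonneg s
      have := hε
      apply div_nonpos_of_nonpos_of_nonneg <;> nlinarith [abs_nonneg s]
    nlinarith
  -- pointwise convexity on same-sign pairs
  have key : ∀ a b : ℝ, (0 ≤ a ∧ 0 ≤ b) ∨ (a ≤ 0 ∧ b ≤ 0) →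
      Wε ((1 - t) * a + t * b) ≤ (1 - t) * Wε a + t * Wε b := by
    intro a b hab
    have habs : |(1 - t) * a + t * b| = (1 - t) * |a| + t * |b| := by
      rcases hab with ⟨ha, hb⟩ | ⟨ha, hb⟩
      · rw [abs_of_nonneg ha, abs_of_nonneg hb, abs_of_nonneg (by nlinarith)]
      · rw [abs_of_nonpos ha, abs_of_nonpos hb, abs_of_nonpos (by nlinarith)]
        ring
    rw [hW, hW, hW, habs]
    have hconv := convexOn_exp.2 (Set.mem_univ (-|a| / ε)) (Set.mem_univ (-|b| / ε))
      (by linarith : (0:ℝ) ≤ 1 - t) ht0 (by ring)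
    simp only [smul_eq_mul] at hconv
    have heq : -((1 - t) * |a| + t * |b|) / ε = (1 - t) * (-|a| / ε) + t * (-|b| / ε) := by
      field_simp; ring
    rw [heq]
    nlinarith [hconv, Real.exp_pos (-|a| / ε), Real.exp_pos (-|b| / ε)]
  -- pointwise inequality for x, y
  have hpt : ∀ x y : ℝ,
      Wε ((1 - t) * (x - y) + t * (T x - T y)) ≤ (1 - t) * Wε (x - y) + t * Wε (T x - T y) := by
    intro x y
    apply key
    rcases le_total y x with h | h
    · exact Or.inl ⟨by linarith, sub_nonneg.2 (hT_mono h)⟩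
    · exact Or.inr ⟨by linarith, sub_nonpos.2 (hT_mono h)⟩
  -- integrability helpers
  have intW : ∀ (f : ℝ → ℝ), Measurable f → Integrable (fun y => Wε (f y)) ρ₀ := by
    intro f hf
    refine (integrable_const c).mono' ((hWcont.measurable.comp hf).aestronglyMeasurable) ?_
    filter_upwards with y
    rw [Real.norm_eq_abs, abs_of_nonneg (hWnn _)]
    exact hWle _
  have inner_bound : ∀ (f : ℝ → ℝ), Measurable f →
      ‖∫ y, Wε (f y) ∂ρ₀‖ ≤ c := by
    intro f hf
    calc ‖∫ y, Wε (f y) ∂ρ₀‖ ≤ ∫ y, ‖Wε (f y)‖ ∂ρ₀ := norm_integral_le_integral_norm _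
      _ ≤ ∫ _, c ∂ρ₀ := by
          apply integral_mono ((intW f hf).norm) (integrable_const c)
          intro y
          show ‖Wε (f y)‖ ≤ c
          rw [Real.norm_eq_abs, abs_of_nonneg (hWnn _)]
          exact hWle _
      _ = c := by simp
  have intInner : ∀ (F : ℝ × ℝ → ℝ), Measurable F →
      Integrable (fun x => ∫ y, Wε (F (x, y)) ∂ρ₀) ρ₀ := by
    intro F hF
    have hsm : StronglyMeasurable fun p : ℝ × ℝ => Wε (F p) :=
      (hWcont.measurable.comp hF).stronglyMeasurable
    refine (integrable_const c).mono' (hsm.integral_prod_right').aestronglyMeasurable ?_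
    filter_upwards with x
    exact inner_bound (fun y => F (x, y)) (hF.comp (measurable_const.prodMk measurable_id))
  have hF1 : Measurable fun p : ℝ × ℝ => p.1 - p.2 := measurable_fst.sub measurable_snd
  have hF2 : Measurable fun p : ℝ × ℝ => T p.1 - T p.2 :=
    (hT_meas.comp measurable_fst).sub (hT_meas.comp measurable_snd)
  have hF3 : Measurable fun p : ℝ × ℝ => (1 - t) * (p.1 - p.2) + t * (T p.1 - T p.2) :=
    (measurable_const.mul hF1).add (measurable_const.mul hF2)
  have int1 := intInner _ hF1
  have int2 := intInner _ hF2
  have int3 := intInner _ hF3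
  -- inner integral inequality
  have hInner : ∀ x : ℝ,
      (∫ y, Wε ((1 - t) * (x - y) + t * (T x - T y)) ∂ρ₀)
        ≤ (1 - t) * ∫ y, Wε (x - y) ∂ρ₀ + t * ∫ y, Wε (T x - T y) ∂ρ₀ := by
    intro x
    have i1 : Integrable (fun y => Wε (x - y)) ρ₀ :=
      intW _ (measurable_const.sub measurable_id)
    have i2 : Integrable (fun y => Wε (T x - T y)) ρ₀ :=
      intW _ (measurable_const.sub hT_meas)
    have i3 : Integrable (fun y => Wε ((1 - t) * (x - y) + t * (T x - T y))) ρ₀ :=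
      intW _ ((measurable_const.mul (measurable_const.sub measurable_id)).add
        (measurable_const.mul (measurable_const.sub hT_meas)))
    calc (∫ y, Wε ((1 - t) * (x - y) + t * (T x - T y)) ∂ρ₀)
        ≤ ∫ y, ((1 - t) * Wε (x - y) + t * Wε (T x - T y)) ∂ρ₀ := by
          apply integral_mono i3 ((i1.const_mul _).add (i2.const_mul _))
          intro y; exact hpt x y
      _ = (1 - t) * ∫ y, Wε (x - y) ∂ρ₀ + t * ∫ y, Wε (T x - T y) ∂ρ₀ := by
          rw [integral_add (i1.const_mul _) (i2.const_mul _),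
            integral_const_mul, integral_const_mul]
  calc (∫ x : ℝ, ∫ y : ℝ, Wε ((1 - t) * (x - y) + t * (T x - T y)) ∂ρ₀ ∂ρ₀)
      ≤ ∫ x : ℝ, ((1 - t) * ∫ y, Wε (x - y) ∂ρ₀ + t * ∫ y, Wε (T x - T y) ∂ρ₀) ∂ρ₀ := by
        apply integral_mono int3 ((int1.const_mul _).add (int2.const_mul _))
        intro x; exact hInner x
    _ = (1 - t) * ∫ x : ℝ, ∫ y : ℝ, Wε (x - y) ∂ρ₀ ∂ρ₀
        + t * ∫ x : ℝ, ∫ y : ℝ, Wε (T x - T y) ∂ρ₀ ∂ρ₀ := by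
        rw [integral_add (int1.const_mul _) (int2.const_mul _),
          integral_const_mul, integral_const_mul]
end
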